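/- Let π be the strictly alternating policy of length p starting with agent 1 (π = 1212…) for two agents with Borda utilities and uniform independent profiles. Then the expected utilities are (ū_1(π), ū_2(π)) = (p(p+1)/3, (p²−1)/3 + γ_{p+1}/3) if p is even, and (ū_1(π), ū_2(π)) = (p(p+1)/3 + γ_{p+1}/3, (p²−1)/3) if p is odd; consequently the expected utilitarian social welfare is s̄w(π) = (1/3)·[(2p−1)(p+1) + γ_{p+1}]. -/

import Mathlib

open Finset

namespace SeqAlloc

/-- Given an agent's ranking `r` (a bijection sending each item to its position,
position `0` being the most preferred), pick the most preferred item of a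
nonempty set `S` of remaining items. -/
def pickItem {p : ℕ} (r : Equiv.Perm (Fin p)) (S : Finset (Fin p)) (h : S.Nonempty) : Fin p :=
  r.symm ((S.image r).min' (h.image r))

/-- Sequential allocation: the agents in the list take turns; each takes her
most preferred remaining item.  Returns the list of (agent, item) pairs. -/
def allocList {n p : ℕ} (R : Fin n → Equiv.Perm (Fin p)) :
    List (Fin n) → Finset (Fin p) → List (Fin n × Fin p)
  | [], _ => []
  | a :: rest, S =>
    if h : S.Nonempty then
      (a, pickItem (R a) S h) :: allocList R rest (S.erase (pickItem (R a) S h))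
    else []

/-- The utility that agent `i` obtains when the items `Fin p` are allocated
sequentially according to the policy `π` under profile `R`, where an item
ranked in (1-indexed) position `k` by an agent is worth `g k` to her. -/
noncomputable def utilAgent {n p : ℕ} (g : ℕ → ℝ) (R : Fin n → Equiv.Perm (Fin p))
    (π : List (Fin n)) (i : Fin n) : ℝ :=
  ((allocList R π Finset.univ).map
    (fun x => if x.1 = i then g (((R i) x.2).val + 1) else 0)).sum

/-- The expected utility of agent `i` under policy `π` for `p` items and scoring
function `g`, the profiles being drawn uniformly and independently. -/
noncomputable def expectedUtil (n p : ℕ) (g : ℕ → ℝ) (π : List (Fin n)) (i : Fin n) : ℝ :=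
  (∑ R : Fin n → Equiv.Perm (Fin p), utilAgent g R π i) / ((p.factorial : ℝ) ^ n)

/-- Expected Borda utility: an item ranked (1-indexed) in position `k` is worth
`p - k + 1`. -/
noncomputable def expectedBordaUtil (n p : ℕ) (π : List (Fin n)) (i : Fin n) : ℝ :=
  expectedUtil n p (fun k => (p : ℝ) - k + 1) π i

/-- The strictly alternating policy `1212…` of length `p` for two agents. -/
def altPolicy (p : ℕ) : List (Fin 2) :=
  (List.range p).map (fun k => if k % 2 = 0 then 0 else 1)

end SeqAlloc

/-- The sequence `γ` with `γ₁ = γ₂ = 1` and `γ_k = ∏_{j=1}^{⌊(k−1)/2⌋} (2j+1)/(2j)`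
for `k ≥ 3` (the empty product is `1`, so the formula is also valid for `k = 1, 2`). -/
noncomputable def gammaSeq (k : ℕ) : ℝ :=
  ∏ j ∈ Finset.Icc 1 ((k - 1) / 2), (2 * (j : ℝ) + 1) / (2 * (j : ℝ))

/-!
Fix the ranking `r` of agent `0`. Summed over a coset `b * permsOn S` of opponent rankings, where
`S` is the set of remaining items, the opponent's pick is uniform on `S`: the coset splits into the
cosets `b * swap x y * permsOn (S.erase x)` (with `y` the pick of `b`), on each of which he picks
`x`, and what remains of his ranking ranges again over a coset of the same kind. Hence the expected
utility of agent `0` is her expected score against an opponent who removes a uniformly random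
remaining item, a quantity that is linear in her vector of scores. For the Borda scores
`(n + 1, …, 1)` a uniformly random deletion leaves `(n + 2) / (n + 1) • (n, …, 1)` on average, so
the values `A n`, `B n` of the alternating policies of length `n` started by agent `0` resp. by her
opponent satisfy `A (n + 1) = n + 1 + B n` and `B (n + 1) = (n + 2) / (n + 1) * A n`, which the
closed forms solve. Agent `1` is reduced to agent `0` by exchanging the names of the agents.
-/

lemma gammaSeq_one : gammaSeq 1 = 1 := by
  simp [gammaSeq]

lemma gammaSeq_add_two_of_even {n : ℕ} (hn : Even n) : gammaSeq (n + 2) = gammaSeq (n + 1) := by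
  obtain ⟨m, rfl⟩ := hn
  rw [gammaSeq, gammaSeq, show (m + m + 2 - 1) / 2 = m by omega,
    show (m + m + 1 - 1) / 2 = m by omega]

lemma gammaSeq_add_two_of_odd {n : ℕ} (hn : Odd n) :
    gammaSeq (n + 2) = (n + 2) / (n + 1) * gammaSeq (n + 1) := by
  obtain ⟨m, rfl⟩ := hn
  rw [gammaSeq, gammaSeq, show (2 * m + 1 + 2 - 1) / 2 = m + 1 by omega,
    show (2 * m + 1 + 1 - 1) / 2 = m by omega, prod_Icc_succ_top (by omega), mul_comm]
  push_cast
  ring_nf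

namespace SeqAlloc

open Equiv

section PermsOn

variable {α : Type*} [Fintype α] [DecidableEq α]

def permsOn (S : Finset α) : Finset (Perm α) :=
  univ.filter fun σ => ∀ x ∉ S, σ x = x

variable {S : Finset α} {σ : Perm α}

@[simp] lemma mem_permsOn : σ ∈ permsOn S ↔ ∀ x ∉ S, σ x = x := by
  simp [permsOn]

@[simp] lemma permsOn_univ : permsOn (univ : Finset α) = univ := by
  ext σ; simp

lemma apply_mem_of_mem_permsOn (hσ : σ ∈ permsOn S) {x : α} (hx : x ∈ S) : σ x ∈ S := by
  by_contra h
  rw [σ.injective (mem_permsOn.1 hσ _ h)] at h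
  exact h hx

lemma symm_apply_mem_of_mem_permsOn (hσ : σ ∈ permsOn S) {x : α} (hx : x ∈ S) :
    σ.symm x ∈ S := by
  by_contra h
  have hfix := mem_permsOn.1 hσ _ h
  rw [apply_symm_apply] at hfix
  exact h (hfix ▸ hx)

lemma image_eq_of_mem_permsOn (hσ : σ ∈ permsOn S) :
    S.image σ = S :=
  eq_of_subset_of_card_le (image_subset_iff.2 fun _ hx => apply_mem_of_mem_permsOn hσ hx)
    (card_image_of_injective _ σ.injective).ge

lemma card_permsOn (S : Finset α) : #(permsOn S) = (#S).factorial := by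
  rw [← Fintype.card_coe, ← Fintype.card_coe S, ← Fintype.card_perm]
  exact Fintype.card_congr <| (Equiv.subtypeEquivRight fun σ => by simp [mem_permsOn]).trans
    (Perm.subtypeEquivSubtypePerm (· ∈ S)).symm

lemma image_swap_mul_permsOn_erase {x y : α} (hx : x ∈ S) (hy : y ∈ S) :
    (permsOn (S.erase y)).image (swap x y * ·) = (permsOn S).filter (· y = x) := by
  ext σ
  simp only [mem_image, mem_filter, mem_permsOn, mem_erase]
  constructor
  · rintro ⟨ρ, hρ, rfl⟩
    have hρy : ρ y = y := hρ y (by simp)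
    refine ⟨fun z hz => ?_, by simp [hρy]⟩
    rw [Perm.mul_apply, hρ z (fun h => hz h.2),
      swap_apply_of_ne_of_ne (by rintro rfl; exact hz hx) (by rintro rfl; exact hz hy)]
  · rintro ⟨hσ, hσy⟩
    refine ⟨swap x y * σ, fun z hz => ?_, by simp [← mul_assoc]⟩
    by_cases hzy : z = y
    · simp [hzy, hσy]
    · have hzS : z ∉ S := fun h => hz ⟨hzy, h⟩
      rw [Perm.mul_apply, hσ z hzS,
        swap_apply_of_ne_of_ne (by rintro rfl; exact hzS hx) hzy]

lemma sum_permsOn_fiberwise_apply {M : Type*} [AddCommMonoid M] {y : α} (hy : y ∈ S)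
    (F : Perm α → M) :
    ∑ σ ∈ permsOn S, F σ = ∑ x ∈ S, ∑ ρ ∈ permsOn (S.erase y), F (swap x y * ρ) := by
  rw [← sum_fiberwise_of_maps_to (g := (· y)) fun σ hσ => apply_mem_of_mem_permsOn hσ hy]
  refine sum_congr rfl fun x hx => ?_
  rw [← image_swap_mul_permsOn_erase hx hy, sum_image fun _ _ _ _ h => mul_left_cancel h]

lemma sum_permsOn_fiberwise_symm_apply {M : Type*} [AddCommMonoid M] {y : α} (hy : y ∈ S)
    (F : Perm α → M) :
    ∑ σ ∈ permsOn S, F σ = ∑ x ∈ S, ∑ ρ ∈ permsOn (S.erase x), F (swap x y * ρ) := by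
  rw [← sum_fiberwise_of_maps_to (g := fun σ => σ.symm y)
    fun σ hσ => symm_apply_mem_of_mem_permsOn hσ hy]
  refine sum_congr rfl fun x hx => ?_
  have hfiber : (permsOn S).filter (fun σ => σ.symm y = x) = (permsOn S).filter (· x = y) :=
    filter_congr fun σ _ => σ.symm_apply_eq.trans eq_comm
  rw [hfiber, ← image_swap_mul_permsOn_erase hy hx, sum_image fun _ _ _ _ h => mul_left_cancel h]
  simp only [swap_comm]

end PermsOn

section OrderEmb

variable {α : Type*} [LinearOrder α]

lemma orderEmbOfFin_erase {T : Finset α} {m : ℕ} (h : #T = m + 1) (k : Fin (m + 1))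
    (h' : #(T.erase (T.orderEmbOfFin h k)) = m) :
    ⇑((T.erase (T.orderEmbOfFin h k)).orderEmbOfFin h') = T.orderEmbOfFin h ∘ k.succAbove := by
  refine (orderEmbOfFin_unique h' (fun j => ?_) ((T.orderEmbOfFin h).strictMono.comp
    (Fin.strictMono_succAbove k))).symm
  simp [Fin.succAbove_ne]

lemma sum_orderEmbOfFin {M : Type*} [AddCommMonoid M] (T : Finset α) {m : ℕ} (h : #T = m)
    (f : α → M) : ∑ t ∈ T, f t = ∑ k : Fin m, f (T.orderEmbOfFin h k) := by
  conv_lhs => rw [← image_orderEmbOfFin_univ T h]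
  exact sum_image fun _ _ _ _ hij => (T.orderEmbOfFin h).injective hij

end OrderEmb

variable {p : ℕ}

lemma apply_pickItem (r : Perm (Fin p)) (S : Finset (Fin p)) (h : S.Nonempty) :
    r (pickItem r S h) = (S.image r).min' (h.image r) := by
  simp [pickItem]

lemma pickItem_mem (r : Perm (Fin p)) (S : Finset (Fin p)) (h : S.Nonempty) :
    pickItem r S h ∈ S := by
  obtain ⟨x, hx, hrx⟩ := mem_image.1 ((S.image r).min'_mem (h.image r))
  rwa [pickItem, ← hrx, symm_apply_apply]

lemma pickItem_mul_of_mem_permsOn (b : Perm (Fin p)) {S : Finset (Fin p)} {σ : Perm (Fin p)}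
    (hσ : σ ∈ permsOn S) (h : S.Nonempty) : pickItem (b * σ) S h = σ.symm (pickItem b S h) := by
  simp only [pickItem, Perm.coe_mul, ← image_image, image_eq_of_mem_permsOn hσ]
  rfl

noncomputable def utilFrom {n : ℕ} (g : ℕ → ℝ) (R : Fin n → Perm (Fin p)) (π : List (Fin n))
    (i : Fin n) (S : Finset (Fin p)) : ℝ :=
  ((allocList R π S).map fun x => if x.1 = i then g (((R i) x.2).val + 1) else 0).sum

section UtilFrom

variable {n : ℕ} (g : ℕ → ℝ) (R : Fin n → Perm (Fin p)) (i : Fin n)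

@[simp] lemma utilFrom_nil (S : Finset (Fin p)) : utilFrom g R [] i S = 0 := rfl

@[simp] lemma utilFrom_empty (π : List (Fin n)) : utilFrom g R π i ∅ = 0 := by
  cases π <;> simp [utilFrom, allocList]

lemma utilFrom_cons (a : Fin n) (π : List (Fin n)) {S : Finset (Fin p)} (h : S.Nonempty) :
    utilFrom g R (a :: π) i S =
      (if a = i then g ((R i (pickItem (R a) S h)).val + 1) else 0) +
        utilFrom g R π i (S.erase (pickItem (R a) S h)) := by
  rw [utilFrom, allocList, dif_pos h, List.map_cons, List.sum_cons]
  rfl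

end UtilFrom

section Relabel

variable {n : ℕ}

lemma allocList_comp_perm (R : Fin n → Perm (Fin p)) (τ : Perm (Fin n)) (π : List (Fin n))
    (S : Finset (Fin p)) :
    allocList (R ∘ τ) (π.map τ.symm) S = (allocList R π S).map (Prod.map τ.symm id) := by
  induction π generalizing S with
  | nil => rfl
  | cons a π ih =>
    by_cases h : S.Nonempty
    · simp [allocList, h, ih]
    · simp [allocList, h]

lemma utilAgent_comp_perm (g : ℕ → ℝ) (R : Fin n → Perm (Fin p)) (τ : Perm (Fin n))
    (π : List (Fin n)) (i : Fin n) :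
    utilAgent g (R ∘ τ) (π.map τ.symm) i = utilAgent g R π (τ i) := by
  rw [utilAgent, allocList_comp_perm, List.map_map]
  simp [utilAgent, Function.comp_def, symm_apply_eq]

theorem expectedUtil_apply_perm (g : ℕ → ℝ) (π : List (Fin n)) (τ : Perm (Fin n)) (i : Fin n) :
    expectedUtil n p g π (τ i) = expectedUtil n p g (π.map τ.symm) i := by
  simp only [expectedUtil, ← utilAgent_comp_perm g _ τ]
  congr 1
  exact (arrowCongr τ.symm (Equiv.refl _)).sum_comp fun R => utilAgent g R (π.map τ.symm) i

end Relabel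

/-- Expected total score collected by agent `0` from a vector `v` of scores of the remaining items,
listed in her order of preference, when her opponent removes a uniformly random remaining item at
each of his turns. -/
noncomputable def randomOpponentValue : List (Fin 2) → (m : ℕ) → (Fin m → ℝ) →ₗ[ℝ] ℝ
  | [], _ => 0
  | _ :: _, 0 => 0
  | a :: π, m + 1 =>
    if a = 0 then
      LinearMap.proj 0 + (randomOpponentValue π m).comp (LinearMap.funLeft ℝ ℝ Fin.succ)
    else
      ((m : ℝ) + 1)⁻¹ • ∑ k : Fin (m + 1),
        (randomOpponentValue π m).comp (LinearMap.funLeft ℝ ℝ k.succAbove)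

@[simp] lemma randomOpponentValue_nil (m : ℕ) (v : Fin m → ℝ) :
    randomOpponentValue [] m v = 0 := by
  simp [randomOpponentValue]

@[simp] lemma randomOpponentValue_cons_fin_zero (a : Fin 2) (π : List (Fin 2)) (v : Fin 0 → ℝ) :
    randomOpponentValue (a :: π) 0 v = 0 := by
  simp [randomOpponentValue]

lemma randomOpponentValue_zero_cons (π : List (Fin 2)) (m : ℕ) (v : Fin (m + 1) → ℝ) :
    randomOpponentValue (0 :: π) (m + 1) v = v 0 + randomOpponentValue π m (Fin.tail v) := by
  rw [randomOpponentValue, if_pos rfl]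
  rfl

lemma randomOpponentValue_one_cons (π : List (Fin 2)) (m : ℕ) (v : Fin (m + 1) → ℝ) :
    randomOpponentValue (1 :: π) (m + 1) v =
      ((m : ℝ) + 1)⁻¹ * ∑ k : Fin (m + 1), randomOpponentValue π m (k.removeNth v) := by
  rw [randomOpponentValue, if_neg one_ne_zero]
  simp only [LinearMap.smul_apply, LinearMap.sum_apply, LinearMap.comp_apply, smul_eq_mul]
  rfl

/-- The scores of the remaining items, in the order of preference of an agent, when `T` is the set
of positions that these items occupy in her ranking. -/
def rankedScores (g : ℕ → ℝ) (T : Finset (Fin p)) {m : ℕ} (h : #T = m) : Fin m → ℝ :=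
  fun j => g ((T.orderEmbOfFin h j).val + 1)

lemma rankedScores_erase (g : ℕ → ℝ) {T : Finset (Fin p)} {m : ℕ} (h : #T = m + 1)
    (k : Fin (m + 1)) (h' : #(T.erase (T.orderEmbOfFin h k)) = m) :
    rankedScores g (T.erase (T.orderEmbOfFin h k)) h' = k.removeNth (rankedScores g T h) := by
  ext j
  simp only [rankedScores, Fin.removeNth, orderEmbOfFin_erase h k h', Function.comp_apply]

def RandomOpponentReduction (g : ℕ → ℝ) (r : Perm (Fin p)) (π : List (Fin 2)) : Prop :=
  ∀ S T : Finset (Fin p), S.image r = T → ∀ (m : ℕ) (hm : #T = m) (b : Perm (Fin p)),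
    ∑ σ ∈ permsOn S, utilFrom g ![r, b * σ] π 0 S =
      m.factorial * randomOpponentValue π m (rankedScores g T hm)

section Reduction

variable {g : ℕ → ℝ} {r : Perm (Fin p)}

lemma randomOpponentReduction_nil : RandomOpponentReduction g r [] := by
  intro S T _ m hm b
  simp

lemma RandomOpponentReduction.zero_cons {π : List (Fin 2)} (ih : RandomOpponentReduction g r π) :
    RandomOpponentReduction g r (0 :: π) := by
  rintro S T rfl (_ | m) hm b
  · obtain rfl : S = ∅ := by simpa using hm
    simp
  have hS : S.Nonempty := by
    rw [← card_pos, ← card_image_of_injective S r.injective, hm]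
    exact m.succ_pos
  set y := pickItem r S hS
  have hy : y ∈ S := pickItem_mem r S hS
  have hry : r y = (S.image r).orderEmbOfFin hm 0 := by
    rw [apply_pickItem, ← orderEmbOfFin_zero hm m.succ_pos]
    rfl
  have hT' : (S.erase y).image r = (S.image r).erase ((S.image r).orderEmbOfFin hm 0) := by
    rw [image_erase r.injective, hry]
  have hm' : #((S.image r).erase ((S.image r).orderEmbOfFin hm 0)) = m := by
    rw [card_erase_of_mem (orderEmbOfFin_mem _ _ _), hm, Nat.add_sub_cancel]
  have hstep : ∀ σ, utilFrom g ![r, b * σ] (0 :: π) 0 S =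
      g ((r y).val + 1) + utilFrom g ![r, b * σ] π 0 (S.erase y) := fun σ => by
    simp [utilFrom_cons g _ 0 0 π hS, y]
  have hrest : ∀ x ∈ S, ∑ ρ ∈ permsOn (S.erase y),
      utilFrom g ![r, b * (swap x y * ρ)] π 0 (S.erase y) =
        m.factorial * randomOpponentValue π m (Fin.tail (rankedScores g (S.image r) hm)) := by
    intro x _
    simp_rw [← mul_assoc]
    rw [ih _ _ hT' m hm' (b * swap x y), rankedScores_erase, Fin.removeNth_zero]
  rw [sum_congr rfl fun σ _ => hstep σ, sum_add_distrib, sum_const, card_permsOn,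
    sum_permsOn_fiberwise_apply hy, sum_congr rfl hrest, sum_const, randomOpponentValue_zero_cons,
    ← card_image_of_injective S r.injective, hm, Nat.factorial_succ]
  simp only [rankedScores, hry, nsmul_eq_mul]
  push_cast
  ring

lemma RandomOpponentReduction.one_cons {π : List (Fin 2)} (ih : RandomOpponentReduction g r π) :
    RandomOpponentReduction g r (1 :: π) := by
  rintro S T rfl (_ | m) hm b
  · obtain rfl : S = ∅ := by simpa using hm
    simp
  have hS : S.Nonempty := by
    rw [← card_pos, ← card_image_of_injective S r.injective, hm]
    exact m.succ_pos
  set y := pickItem b S hS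
  have hy : y ∈ S := pickItem_mem b S hS
  -- on the coset `swap x y * permsOn (S.erase x)` the opponent always picks `x`
  have hstep : ∀ x ∈ S, ∀ ρ ∈ permsOn (S.erase x),
      utilFrom g ![r, b * (swap x y * ρ)] (1 :: π) 0 S =
        utilFrom g ![r, b * swap x y * ρ] π 0 (S.erase x) := by
    intro x hx ρ hρ
    obtain ⟨hσ, hσx⟩ := mem_filter.1 <|
      image_swap_mul_permsOn_erase hy hx ▸ mem_image_of_mem (swap y x * ·) hρ
    rw [swap_comm] at hσ hσx
    have hpick : pickItem (b * (swap x y * ρ)) S hS = x := by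
      rw [pickItem_mul_of_mem_permsOn b hσ, symm_apply_eq, hσx]
    simp [utilFrom_cons g _ 0 1 π hS, hpick, mul_assoc]
  have hreindex : ∀ f : Fin p → ℝ, ∑ x ∈ S, f x =
      ∑ k : Fin (m + 1), f (r.symm ((S.image r).orderEmbOfFin hm k)) := by
    intro f
    rw [← sum_orderEmbOfFin _ hm fun t => f (r.symm t), sum_image r.injective.injOn]
    simp
  have hrest : ∀ k : Fin (m + 1),
      ∑ ρ ∈ permsOn (S.erase (r.symm ((S.image r).orderEmbOfFin hm k))),
        utilFrom g ![r, b * swap (r.symm ((S.image r).orderEmbOfFin hm k)) y * ρ] π 0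
          (S.erase (r.symm ((S.image r).orderEmbOfFin hm k))) =
        m.factorial * randomOpponentValue π m (k.removeNth (rankedScores g (S.image r) hm)) := by
    intro k
    rw [ih _ _ (by rw [image_erase r.injective, apply_symm_apply]) m
      (by rw [card_erase_of_mem (orderEmbOfFin_mem _ _ _), hm, Nat.add_sub_cancel]),
      rankedScores_erase]
  rw [sum_permsOn_fiberwise_symm_apply hy, sum_congr rfl fun x hx => sum_congr rfl (hstep x hx),
    hreindex, sum_congr rfl fun k _ => hrest k, ← mul_sum, randomOpponentValue_one_cons,
    Nat.factorial_succ]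
  push_cast
  field_simp

end Reduction

theorem randomOpponentReduction (g : ℕ → ℝ) (r : Perm (Fin p)) :
    ∀ π, RandomOpponentReduction g r π
  | [] => randomOpponentReduction_nil
  | 0 :: π => (randomOpponentReduction g r π).zero_cons
  | 1 :: π => (randomOpponentReduction g r π).one_cons

lemma rankedScores_univ (g : ℕ → ℝ) (h : #(univ : Finset (Fin p)) = p) :
    rankedScores g univ h = fun j => g (j.val + 1) := by
  ext j
  simp only [rankedScores, ← orderEmbOfFin_unique h (fun _ => mem_univ _) strictMono_id, id]

theorem expectedUtil_two_zero (g : ℕ → ℝ) (π : List (Fin 2)) :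
    expectedUtil 2 p g π 0 = randomOpponentValue π p fun j => g (j.val + 1) := by
  have hinner : ∀ r : Perm (Fin p), ∑ r' : Perm (Fin p), utilAgent g ![r, r'] π 0 =
      p.factorial * randomOpponentValue π p fun j => g (j.val + 1) := by
    intro r
    have := randomOpponentReduction g r π univ univ (image_univ_equiv r) p (by simp) 1
    simp only [permsOn_univ, one_mul, rankedScores_univ] at this
    exact this
  have hsplit : ∑ R : Fin 2 → Perm (Fin p), utilAgent g R π 0 =
      ∑ r : Perm (Fin p), ∑ r', utilAgent g ![r, r'] π 0 := by
    rw [← (piFinTwoEquiv fun _ => Perm (Fin p)).symm.sum_comp, Fintype.sum_prod_type]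
    rfl
  simp only [expectedUtil, hsplit, hinner, sum_const, card_univ, Fintype.card_perm,
    Fintype.card_fin, nsmul_eq_mul]
  field_simp

def bordaScores (n : ℕ) : Fin n → ℝ := fun j => n - j

lemma tail_bordaScores (n : ℕ) : Fin.tail (bordaScores (n + 1)) = bordaScores n := by
  ext j
  simp [bordaScores, Fin.tail]

/-- Deleting entry `k` of `(n + 1, n, …, 1)` leaves `n - j` in position `j`, plus one if `j < k`. -/
lemma sum_removeNth_bordaScores (n : ℕ) :
    ∑ k : Fin (n + 1), k.removeNth (bordaScores (n + 1)) = ((n : ℝ) + 2) • bordaScores n := by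
  ext j
  have hterm : ∀ k : Fin (n + 1),
      k.removeNth (bordaScores (n + 1)) j = ((n : ℝ) - j) + if j.castSucc < k then 1 else 0 := by
    intro k
    simp only [Fin.removeNth, bordaScores, Fin.succAbove]
    split_ifs <;> push_cast [Fin.val_castSucc, Fin.val_succ] <;> ring
  have hcard : #(univ.filter fun k : Fin (n + 1) => j.castSucc < k) = n - j := by
    rw [filter_lt_eq_Ioi, Fin.card_Ioi]
    simp
  simp only [Finset.sum_apply, hterm, sum_add_distrib, sum_const, card_univ, Fintype.card_fin,
    sum_boole, hcard, Pi.smul_apply, bordaScores, smul_eq_mul, nsmul_eq_mul]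
  rw [Nat.cast_sub j.is_lt.le]
  push_cast
  ring

lemma randomOpponentValue_zero_cons_bordaScores (π : List (Fin 2)) (n : ℕ) :
    randomOpponentValue (0 :: π) (n + 1) (bordaScores (n + 1)) =
      n + 1 + randomOpponentValue π n (bordaScores n) := by
  rw [randomOpponentValue_zero_cons, tail_bordaScores]
  simp [bordaScores]

lemma randomOpponentValue_one_cons_bordaScores (π : List (Fin 2)) (n : ℕ) :
    randomOpponentValue (1 :: π) (n + 1) (bordaScores (n + 1)) =
      (n + 2) / (n + 1) * randomOpponentValue π n (bordaScores n) := by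
  rw [randomOpponentValue_one_cons, ← map_sum, sum_removeNth_bordaScores, map_smul, smul_eq_mul]
  field_simp

lemma altPolicy_succ (n : ℕ) : altPolicy (n + 1) = 0 :: (altPolicy n).map Fin.rev := by
  simp only [altPolicy, List.range_succ_eq_map, List.map_cons, List.map_map]
  congr 1
  refine List.map_congr_left fun k _ => ?_
  rcases Nat.mod_two_eq_zero_or_one k with hk | hk <;> simp [hk, Nat.succ_mod_two_eq_zero_iff]

lemma map_rev_altPolicy_succ (n : ℕ) : (altPolicy (n + 1)).map Fin.rev = 1 :: altPolicy n := by
  simp [altPolicy_succ, Function.comp_def]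

theorem randomOpponentValue_altPolicy_bordaScores (n : ℕ) :
    (Even n →
      randomOpponentValue (altPolicy n) n (bordaScores n) = (n : ℝ) * (n + 1) / 3 ∧
      randomOpponentValue ((altPolicy n).map Fin.rev) n (bordaScores n) =
        ((n : ℝ) ^ 2 - 1) / 3 + gammaSeq (n + 1) / 3) ∧
    (Odd n →
      randomOpponentValue (altPolicy n) n (bordaScores n) =
        (n : ℝ) * (n + 1) / 3 + gammaSeq (n + 1) / 3 ∧
      randomOpponentValue ((altPolicy n).map Fin.rev) n (bordaScores n) =
        ((n : ℝ) ^ 2 - 1) / 3) := by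
  induction n with
  | zero => norm_num [altPolicy, gammaSeq_one]
  | succ n ih =>
    rw [map_rev_altPolicy_succ, altPolicy_succ, randomOpponentValue_zero_cons_bordaScores,
      randomOpponentValue_one_cons_bordaScores]
    rcases n.even_or_odd with hn | hn
    · obtain ⟨hA, hB⟩ := ih.1 hn
      refine ⟨fun h => absurd h (Nat.not_even_iff_odd.2 hn.add_one), fun _ => ?_⟩
      rw [hA, hB, gammaSeq_add_two_of_even hn]
      constructor
      · push_cast; ring
      · field_simp; push_cast; ring
    · obtain ⟨hA, hB⟩ := ih.2 hn
      refine ⟨fun _ => ?_, fun h => absurd h (Nat.not_odd_iff_even.2 hn.add_one)⟩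
      rw [hA, hB, gammaSeq_add_two_of_odd hn]
      constructor
      · push_cast; ring
      · field_simp; push_cast; ring

lemma expectedBordaUtil_two_zero (π : List (Fin 2)) :
    expectedBordaUtil 2 p π 0 = randomOpponentValue π p (bordaScores p) := by
  rw [expectedBordaUtil, expectedUtil_two_zero]
  congr 1
  ext j
  simp only [bordaScores, Nat.cast_add, Nat.cast_one]
  ring

lemma expectedBordaUtil_two_one (π : List (Fin 2)) :
    expectedBordaUtil 2 p π 1 = randomOpponentValue (π.map Fin.rev) p (bordaScores p) := by
  rw [← expectedBordaUtil_two_zero, expectedBordaUtil, expectedBordaUtil,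
    show (1 : Fin 2) = Fin.revPerm 0 from rfl, expectedUtil_apply_perm, Fin.revPerm_symm]
  rfl

end SeqAlloc

/-- For two agents, Borda utilities and uniform independent profiles,
the strictly alternating policy `π* = 1212…` of length `p` has expected utilities
`(ū₁, ū₂) = (p(p+1)/3, (p²−1)/3 + γ_{p+1}/3)` if `p` is even and
`(ū₁, ū₂) = (p(p+1)/3 + γ_{p+1}/3, (p²−1)/3)` if `p` is odd, hence expected
utilitarian social welfare `(1/3)·[(2p−1)(p+1) + γ_{p+1}]`. -/
theorem stmt2 (p : ℕ) :
    ((Even p →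
        SeqAlloc.expectedBordaUtil 2 p (SeqAlloc.altPolicy p) 0 = (p : ℝ) * (p + 1) / 3 ∧
        SeqAlloc.expectedBordaUtil 2 p (SeqAlloc.altPolicy p) 1
          = ((p : ℝ) ^ 2 - 1) / 3 + gammaSeq (p + 1) / 3) ∧
      (Odd p →
        SeqAlloc.expectedBordaUtil 2 p (SeqAlloc.altPolicy p) 0
          = (p : ℝ) * (p + 1) / 3 + gammaSeq (p + 1) / 3 ∧
        SeqAlloc.expectedBordaUtil 2 p (SeqAlloc.altPolicy p) 1 = ((p : ℝ) ^ 2 - 1) / 3)) ∧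
    SeqAlloc.expectedBordaUtil 2 p (SeqAlloc.altPolicy p) 0
        + SeqAlloc.expectedBordaUtil 2 p (SeqAlloc.altPolicy p) 1
      = (1 / 3) * ((2 * (p : ℝ) - 1) * ((p : ℝ) + 1) + gammaSeq (p + 1)) := by
  obtain ⟨heven, hodd⟩ := SeqAlloc.randomOpponentValue_altPolicy_bordaScores p
  rw [SeqAlloc.expectedBordaUtil_two_zero, SeqAlloc.expectedBordaUtil_two_one]
  refine ⟨⟨heven, hodd⟩, ?_⟩
  rcases p.even_or_odd with hp | hp
  · rw [(heven hp).1, (heven hp).2]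
    ring
  · rw [(hodd hp).1, (hodd hp).2]
    ring
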